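/- In the braid group B₄ = ⟨a, b, c | aba = bab, bcb = cbc, ac = ca⟩, with x = bac, the normal core of the cyclic subgroup ⟨x⟩ (i.e., the largest normal subgroup of B₄ contained in the subgroup of integer powers of x, equivalently the kernel of the left-multiplication action of B₄ on the left cosets of ⟨x⟩) equals the subgroup of integer powers of x⁴. -/
import Mathlib

set_option maxHeartbeats 1000000

/-- Relators for the braid group `B₄ = ⟨a, b, c | aba = bab, bcb = cbc, ac = ca⟩`,
with generators indexed `0 ↦ a`, `1 ↦ b`, `2 ↦ c`. -/
def braidRels : Set (FreeGroup (Fin 3)) :=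
  { FreeGroup.of 0 * FreeGroup.of 1 * FreeGroup.of 0 *
      (FreeGroup.of 1 * FreeGroup.of 0 * FreeGroup.of 1)⁻¹,
    FreeGroup.of 1 * FreeGroup.of 2 * FreeGroup.of 1 *
      (FreeGroup.of 2 * FreeGroup.of 1 * FreeGroup.of 2)⁻¹,
    FreeGroup.of 0 * FreeGroup.of 2 * (FreeGroup.of 2 * FreeGroup.of 0)⁻¹ }

/-- The braid group on four strands. -/
abbrev B4 := PresentedGroup braidRels

namespace B4

def a : B4 := PresentedGroup.of 0
def b : B4 := PresentedGroup.of 1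
def c : B4 := PresentedGroup.of 2
def d : B4 := (a * c)⁻¹ * b * (a * c)
def e : B4 := a⁻¹ * b * a
def f : B4 := c⁻¹ * b * c
def x : B4 := b * a * c

end B4

open B4

namespace B4Aux

lemma relmk (r : FreeGroup (Fin 3)) (hr : r ∈ braidRels) :
    PresentedGroup.mk braidRels r = 1 := by
  exact (QuotientGroup.eq_one_iff r).mpr (Subgroup.subset_normalClosure hr)

lemma hab : a * b * a = b * a * b := by
  have h := relmk _ (show _ ∈ braidRels from Set.mem_insert _ _)
  simp only [map_mul, map_inv] at h
  exact mul_inv_eq_one.mp h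

lemma hbc : b * c * b = c * b * c := by
  have h := relmk _ (show _ ∈ braidRels from Set.mem_insert_of_mem _ (Set.mem_insert _ _))
  simp only [map_mul, map_inv] at h
  exact mul_inv_eq_one.mp h

lemma hac : a * c = c * a := by
  have h := relmk _ (show _ ∈ braidRels from
    Set.mem_insert_of_mem _ (Set.mem_insert_of_mem _ rfl))
  simp only [map_mul, map_inv] at h
  exact mul_inv_eq_one.mp h

lemma Rab (w : B4) : a * (b * (a * w)) = b * (a * (b * w)) := by
  simp only [← mul_assoc]; rw [hab]
lemma Rba (w : B4) : b * (a * (b * w)) = a * (b * (a * w)) := (Rab w).symm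
lemma Rbc (w : B4) : b * (c * (b * w)) = c * (b * (c * w)) := by
  simp only [← mul_assoc]; rw [hbc]
lemma Rcb (w : B4) : c * (b * (c * w)) = b * (c * (b * w)) := (Rbc w).symm
lemma Rac (w : B4) : a * (c * w) = c * (a * w) := by
  simp only [← mul_assoc]; rw [hac]
lemma Rca (w : B4) : c * (a * w) = a * (c * w) := (Rac w).symm

-- P5: acbacb = bacbac
lemma P5 (w : B4) : a * (c * (b * (a * (c * (b * w))))) = b * (a * (c * (b * (a * (c * w))))) := by
  rw [Rac, Rab, Rbc, Rac, Rcb, Rba, Rca]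

-- P2: bacbaca = cbacbac
lemma P2 (w : B4) :
    b * (a * (c * (b * (a * (c * (a * w)))))) = c * (b * (a * (c * (b * (a * (c * w)))))) := by
  rw [Rac, Rab, Rbc, Rca, Rca]

-- P4: bacbacc = abacbac
lemma P4 (w : B4) :
    b * (a * (c * (b * (a * (c * (c * w)))))) = a * (b * (a * (c * (b * (a * (c * w)))))) := by
  nth_rw 2 [Rac]
  rw [Rcb, Rba]

lemma hx2a : x * x * a = c * (x * x) := by
  show b * a * c * (b * a * c) * a = c * (b * a * c * (b * a * c))
  simp only [mul_assoc]
  simpa only [mul_one] using P2 1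

lemma hx2c : x * x * c = a * (x * x) := by
  show b * a * c * (b * a * c) * c = a * (b * a * c * (b * a * c))
  simp only [mul_assoc]
  simpa only [mul_one] using P4 1

lemma hx2b : x * x * b = b * (x * x) := by
  show b * a * c * (b * a * c) * b = b * (b * a * c * (b * a * c))
  simp only [mul_assoc]
  simpa only [mul_one] using congrArg (b * ·) (P5 1)

lemma hpow4 : x ^ 4 = x * x * (x * x) := by
  rw [show (4 : ℕ) = 2 + 2 from rfl, pow_add, pow_two]

lemma hx4a : Commute (x ^ 4) a := by
  show x ^ 4 * a = a * x ^ 4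
  rw [hpow4, mul_assoc (x * x) (x * x) a, hx2a, ← mul_assoc, hx2c, mul_assoc]

lemma hx4c : Commute (x ^ 4) c := by
  show x ^ 4 * c = c * x ^ 4
  rw [hpow4, mul_assoc (x * x) (x * x) c, hx2c, ← mul_assoc, hx2a, mul_assoc]

lemma hx4b : Commute (x ^ 4) b := by
  show x ^ 4 * b = b * x ^ 4
  rw [hpow4, mul_assoc (x * x) (x * x) b, hx2b, ← mul_assoc, hx2b, mul_assoc]

lemma hx4 (g : B4) : Commute (x ^ 4) g := by
  have hg : g ∈ Subgroup.closure (Set.range (PresentedGroup.of : Fin 3 → B4)) := by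
    rw [PresentedGroup.closure_range_of]; trivial
  induction hg using Subgroup.closure_induction with
  | mem g hgm =>
    obtain ⟨i, rfl⟩ := hgm
    fin_cases i
    · exact hx4a
    · exact hx4b
    · exact hx4c
  | one => exact Commute.one_right _
  | mul u v _ _ hu hv => exact hu.mul_right hv
  | inv u _ hu => exact hu.inv_right

/-! ### The permutation representation -/

def s1 : Equiv.Perm (Fin 4) := Equiv.swap 0 1
def s2 : Equiv.Perm (Fin 4) := Equiv.swap 1 2
def s3 : Equiv.Perm (Fin 4) := Equiv.swap 2 3

def fperm : Fin 3 → Equiv.Perm (Fin 4) := ![s1, s2, s3]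

lemma hrel : ∀ r ∈ braidRels, FreeGroup.lift fperm r = 1 := by
  intro r hr
  rcases hr with rfl | rfl | rfl <;>
    · simp only [map_mul, map_inv, FreeGroup.lift_apply_of]
      decide

def π : B4 →* Equiv.Perm (Fin 4) := PresentedGroup.toGroup hrel

lemma πa : π a = s1 := PresentedGroup.toGroup.of hrel
lemma πb : π b = s2 := PresentedGroup.toGroup.of hrel
lemma πc : π c = s3 := PresentedGroup.toGroup.of hrel

def σ : Equiv.Perm (Fin 4) := s2 * s1 * s3
def τ : Equiv.Perm (Fin 4) := s1 * σ * s1⁻¹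

lemma πx : π x = σ := by
  show π (b * a * c) = σ
  rw [map_mul, map_mul, πa, πb, πc]; rfl

lemma zp4 (g : Equiv.Perm (Fin 4)) (h4 : g ^ (4 : ℤ) = 1) (k : ℤ) : g ^ k = g ^ (k % 4) := by
  conv_lhs => rw [← Int.emod_add_mul_ediv k 4]
  rw [zpow_add, zpow_mul, h4, one_zpow, mul_one]

lemma key (m n : ℤ) (h : τ ^ m = σ ^ n) : m % 4 = 0 := by
  have hσ : σ ^ (4 : ℤ) = 1 := by decide
  have hτ : τ ^ (4 : ℤ) = 1 := by decide
  have h2 : τ ^ (m % 4) = σ ^ (n % 4) := by rw [← zp4 τ hτ, ← zp4 σ hσ, h]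
  have hm0 : 0 ≤ m % 4 := Int.emod_nonneg m (by norm_num)
  have hm4 : m % 4 < 4 := Int.emod_lt_of_pos m (by norm_num)
  have hn0 : 0 ≤ n % 4 := Int.emod_nonneg n (by norm_num)
  have hn4 : n % 4 < 4 := Int.emod_lt_of_pos n (by norm_num)
  set r := m % 4 with hrdef
  set s := n % 4 with hsdef
  clear_value r s
  interval_cases r <;> interval_cases s <;> revert h2 <;> decide

end B4Aux

open B4Aux

theorem statement6 :
    (Subgroup.zpowers x).normalCore = Subgroup.zpowers (x ^ 4) := by
  have hnormal : (Subgroup.zpowers (x ^ 4)).Normal := by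
    constructor
    intro t ht g
    obtain ⟨k, rfl⟩ := ht
    have hc : Commute ((x ^ 4) ^ k) g := (hx4 g).zpow_left k
    rw [← hc.eq, mul_assoc, mul_inv_cancel, mul_one]
    exact ⟨k, rfl⟩
  apply le_antisymm
  · -- normalCore ≤ zpowers (x^4)
    intro g hg
    have hg1 : g ∈ Subgroup.zpowers x := (Subgroup.zpowers x).normalCore_le hg
    obtain ⟨m, rfl⟩ := hg1
    have hconj : a * x ^ m * a⁻¹ ∈ Subgroup.zpowers x := hg a
    obtain ⟨n, hn⟩ := hconj
    -- apply π
    have hπ : τ ^ m = σ ^ n := by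
      have := congrArg π hn
      simp only [map_mul, map_inv, map_zpow, πa, πx] at this
      rw [this]
      exact ((MulAut.conj s1).toMonoidHom.map_zpow σ m).symm
    have h4 : (4 : ℤ) ∣ m := Int.dvd_of_emod_eq_zero (key m n hπ)
    obtain ⟨k, rfl⟩ := h4
    refine ⟨k, ?_⟩
    show (x ^ 4) ^ k = x ^ (4 * k)
    rw [← zpow_natCast x 4, ← zpow_mul]
    norm_num
  · -- zpowers (x^4) ≤ normalCore
    rw [Subgroup.normal_le_normalCore]
    intro t ht
    obtain ⟨k, rfl⟩ := ht
    refine ⟨4 * k, ?_⟩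
    show x ^ ((4 : ℤ) * k) = (x ^ 4) ^ k
    rw [zpow_mul]
    norm_cast
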